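/- arXiv:1807.11801 — 4 statements merged into one kernel-verified Lean document; each statement's English description precedes it below -/
import Mathlib

section
/- Let K ⊆ [0,1]² be the attractor of an IFS {f_a}_{a∈A} of contracting similarities of ℝ², and let u be a line in ℝ². Then K ∩ u ≠ ∅ if and only if there exist M > 0 and a sequence a₁, a₂, … ∈ A such that the sequence of lines u₀ = u, u_i = f_{a_i}⁻¹(u_{i−1}) satisfies dist(0, u_i) ≤ M for all i ≥ 0. -/
open Metric Set
open RealInnerProductSpace

noncomputable section

abbrev E2 := EuclideanSpace ℝ (Fin 2)

def unitSq : Set E2 := {x | ∀ i, x i ∈ Set.Icc (0:ℝ) 1}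

def IsContractingSimilarity (f : E2 → E2) : Prop :=
  ∃ r : ℝ, 0 < r ∧ r < 1 ∧ ∀ x y, dist (f x) (f y) = r * dist x y

def IsLine (u : Set E2) : Prop :=
  ∃ p v : E2, v ≠ 0 ∧ u = {x | ∃ t : ℝ, x = p + t • v}

lemma sim_surjective {g : E2 → E2} {r : ℝ} (hr : 0 < r)
    (hg : ∀ x y, dist (g x) (g y) = r * dist x y) : Function.Surjective g := by
  set h : E2 → E2 := fun x => (1/r) • (g x - g 0) with hh
  have hdist : ∀ x y, dist (h x) (h y) = dist x y := by
    intro x y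
    simp only [hh, dist_eq_norm, ← smul_sub]
    have h1 : g x - g 0 - (g y - g 0) = g x - g y := by abel
    rw [h1, norm_smul, ← dist_eq_norm, hg, Real.norm_eq_abs,
      abs_of_pos (by positivity : (0:ℝ) < 1/r)]
    rw [dist_eq_norm]
    field_simp
  have h0 : h 0 = 0 := by simp [hh]
  have hnorm : ∀ x, ‖h x‖ = ‖x‖ := by
    intro x
    calc ‖h x‖ = dist (h x) (h 0) := by rw [h0, dist_zero_right]
      _ = dist x 0 := hdist x 0
      _ = ‖x‖ := dist_zero_right x
  have hinner : ∀ x y, ⟪h x, h y⟫ = ⟪x, y⟫ := by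
    intro x y
    rw [real_inner_eq_norm_mul_self_add_norm_mul_self_sub_norm_sub_mul_self_div_two,
      real_inner_eq_norm_mul_self_add_norm_mul_self_sub_norm_sub_mul_self_div_two x y,
      hnorm, hnorm, ← dist_eq_norm, ← dist_eq_norm, hdist]
  have hsurj : Function.Surjective h := by
    intro z
    set e : OrthonormalBasis (Fin 2) ℝ E2 := EuclideanSpace.basisFun (Fin 2) ℝ with he
    have heo := e.orthonormal
    rw [orthonormal_iff_ite] at heo
    have hw : Orthonormal ℝ (h ∘ e) := by
      rw [orthonormal_iff_ite]
      intro i j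
      simpa [hinner] using heo i j
    have hcard : Fintype.card (Fin 2) = Module.finrank ℝ E2 := by
      simp [finrank_euclideanSpace_fin]
    set b := basisOfOrthonormalOfCardEqFinrank hw hcard with hb
    have hbc : ∀ i, b i = h (e i) := by
      intro i
      rw [hb, coe_basisOfOrthonormalOfCardEqFinrank]
      rfl
    set c : Fin 2 → ℝ := fun i => b.repr z i with hc
    have hz : c 0 • h (e 0) + c 1 • h (e 1) = z := by
      have := b.sum_repr z
      rwa [Fin.sum_univ_two, hbc 0, hbc 1] at this
    refine ⟨c 0 • e 0 + c 1 • e 1, ?_⟩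
    have key : ⟪h (c 0 • e 0 + c 1 • e 1) - z, h (c 0 • e 0 + c 1 • e 1) - z⟫ = 0 := by
      rw [← hz]
      simp only [inner_sub_left, inner_sub_right, inner_add_left, inner_add_right,
        inner_smul_left, inner_smul_right, hinner, conj_trivial]
      ring
    exact sub_eq_zero.mp (inner_self_eq_zero.mp key)
  intro z
  obtain ⟨x, hx⟩ := hsurj ((1/r) • (z - g 0))
  refine ⟨x, ?_⟩
  have : (1/r) • (g x - g 0) = (1/r) • (z - g 0) := hx
  have h2 := smul_right_injective E2 (by positivity : (1/r : ℝ) ≠ 0) this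
  exact sub_left_inj.mp h2

lemma isClosed_of_isLine {u : Set E2} (hu : IsLine u) : IsClosed u := by
  obtain ⟨p, v, hv, rfl⟩ := hu
  have heq : {x : E2 | ∃ t : ℝ, x = p + t • v} =
      (fun w => p + w) '' ((ℝ ∙ v : Submodule ℝ E2) : Set E2) := by
    ext x
    simp only [mem_setOf_eq, mem_image, SetLike.mem_coe, Submodule.mem_span_singleton]
    constructor
    · rintro ⟨t, rfl⟩; exact ⟨t • v, ⟨t, rfl⟩, rfl⟩
    · rintro ⟨w, ⟨t, rfl⟩, rfl⟩; exact ⟨t, rfl⟩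
  rw [heq]
  have : (fun w : E2 => p + w) = (Homeomorph.addLeft p) := rfl
  rw [this]
  exact (Homeomorph.addLeft p).isClosedMap _
    (Submodule.closed_of_finiteDimensional _)

lemma dist_zero_le_two {x : E2} (hx : x ∈ unitSq) : dist (0 : E2) x ≤ 2 := by
  rw [dist_comm, dist_zero_right, EuclideanSpace.norm_eq]
  have hb : ∀ i : Fin 2, ‖x i‖ ^ 2 ≤ 1 := by
    intro i
    have := hx i
    rw [Real.norm_eq_abs, sq_abs]
    nlinarith [this.1, this.2]
  have hsum : ∑ i : Fin 2, ‖x i‖ ^ 2 ≤ 4 := by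
    rw [Fin.sum_univ_two]
    nlinarith [hb 0, hb 1]
  calc Real.sqrt (∑ i : Fin 2, ‖x i‖ ^ 2) ≤ Real.sqrt 4 := Real.sqrt_le_sqrt hsum
    _ = 2 := by rw [show (4:ℝ) = 2 ^ 2 by norm_num, Real.sqrt_sq (by norm_num)]

theorem stmt0 {A : Type*} [Fintype A] [Nonempty A] (f : A → E2 → E2)
    (hf : ∀ a, IsContractingSimilarity (f a)) (K : Set E2)
    (hKne : K.Nonempty) (hKc : IsCompact K) (hattr : K = ⋃ a, f a '' K)
    (hKI : K ⊆ unitSq) (u : Set E2) (hu : IsLine u) :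
    (K ∩ u).Nonempty ↔
      ∃ M > (0:ℝ), ∃ a : ℕ → A, ∃ U : ℕ → Set E2,
        U 0 = u ∧ (∀ i, U (i + 1) = f (a i) ⁻¹' (U i)) ∧
        ∀ i, infDist (0 : E2) (U i) ≤ M := by
  choose r hr0 hr1 hrd using hf
  have hfK : ∀ b, ∀ x ∈ K, f b x ∈ K := by
    intro b x hx
    rw [hattr]
    exact mem_iUnion.mpr ⟨b, mem_image_of_mem _ hx⟩
  constructor
  · rintro ⟨x0, hx0K, hx0u⟩
    have step : ∀ x ∈ K, ∃ b : A, ∃ y, y ∈ K ∧ f b y = x := by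
      intro x hx
      rw [hattr] at hx
      obtain ⟨b, hb⟩ := mem_iUnion.mp hx
      obtain ⟨y, hy, hfy⟩ := hb
      exact ⟨b, y, hy, hfy⟩
    set T : {x : E2 // x ∈ K} → A × {x : E2 // x ∈ K} := fun x =>
      ⟨(step x x.2).choose, ⟨(step x x.2).choose_spec.choose,
        (step x x.2).choose_spec.choose_spec.1⟩⟩ with hTdef
    have hT : ∀ x : {x : E2 // x ∈ K}, f (T x).1 ((T x).2 : E2) = (x : E2) :=
      fun x => (step x x.2).choose_spec.choose_spec.2
    set X : ℕ → {x : E2 // x ∈ K} :=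
      fun n => Nat.rec (motive := fun _ => {x : E2 // x ∈ K}) ⟨x0, hx0K⟩
        (fun _ x => (T x).2) n with hXdef
    set a : ℕ → A := fun n => (T (X n)).1 with hadef
    have hX : ∀ n, f (a n) ((X (n + 1) : E2)) = (X n : E2) := fun n => hT (X n)
    refine ⟨2, by norm_num, a,
      fun n => Nat.rec (motive := fun _ => Set E2) u (fun n Un => f (a n) ⁻¹' Un) n,
      rfl, fun i => rfl, ?_⟩
    have hXU : ∀ n, (X n : E2) ∈
        Nat.rec (motive := fun _ => Set E2) u (fun n Un => f (a n) ⁻¹' Un) n := by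
      intro n
      induction n with
      | zero => exact hx0u
      | succ n ih =>
        show f (a n) ((X (n + 1) : E2)) ∈
          Nat.rec (motive := fun _ => Set E2) u (fun n Un => f (a n) ⁻¹' Un) n
        rw [hX n]
        exact ih
    intro i
    exact le_trans (infDist_le_dist_of_mem (hXU i)) (dist_zero_le_two (hKI (X i).2))
  · rintro ⟨M, hM, a, U, hU0, hUs, hUd⟩
    have hρne : (Finset.univ : Finset A).Nonempty := Finset.univ_nonempty
    set ρ : ℝ := Finset.univ.sup' hρne r with hρdef
    have hρa : ∀ b, r b ≤ ρ := fun b => Finset.le_sup' r (Finset.mem_univ b)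
    have hρ1 : ρ < 1 := (Finset.sup'_lt_iff hρne).mpr fun b _ => hr1 b
    have hρ0 : 0 < ρ := lt_of_lt_of_le (hr0 (Classical.arbitrary A)) (hρa _)
    have hune : u.Nonempty := by
      obtain ⟨p, v, hv, rfl⟩ := hu
      exact ⟨p, 0, by simp⟩
    have hUne : ∀ i, (U i).Nonempty := by
      intro i
      induction i with
      | zero => rwa [hU0]
      | succ i ih =>
        obtain ⟨y, hy⟩ := ih
        obtain ⟨x, hxy⟩ := sim_surjective (hr0 (a i)) (hrd (a i)) y
        exact ⟨x, by rw [hUs i]; simpa [hxy] using hy⟩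
    have hpt : ∀ i, ∃ y ∈ U i, dist (0 : E2) y < M + 1 := fun i =>
      (infDist_lt_iff (hUne i)).mp (lt_of_le_of_lt (hUd i) (by linarith))
    choose p hpU hpd using hpt
    set g : ℕ → E2 → E2 := fun n =>
      Nat.rec (motive := fun _ => E2 → E2) id (fun n gn => gn ∘ f (a n)) n with hgdef
    have hgu : ∀ n, ∀ x ∈ U n, g n x ∈ u := by
      intro n
      induction n with
      | zero => intro x hx; rwa [hU0] at hx
      | succ n ih =>
        intro x hx
        rw [hUs n] at hx
        exact ih (f (a n) x) hx
    have hgK : ∀ n, ∀ x ∈ K, g n x ∈ K := by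
      intro n
      induction n with
      | zero => intro x hx; exact hx
      | succ n ih => intro x hx; exact ih _ (hfK (a n) x hx)
    have hgdist : ∀ n x y, dist (g n x) (g n y) ≤ ρ ^ n * dist x y := by
      intro n
      induction n with
      | zero =>
        intro x y
        simp only [pow_zero, one_mul]
        exact le_of_eq rfl
      | succ n ih =>
        intro x y
        calc dist (g (n + 1) x) (g (n + 1) y)
            = dist (g n (f (a n) x)) (g n (f (a n) y)) := rfl
          _ ≤ ρ ^ n * dist (f (a n) x) (f (a n) y) := ih _ _
          _ = ρ ^ n * (r (a n) * dist x y) := by rw [hrd]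
          _ ≤ ρ ^ n * (ρ * dist x y) := by
              apply mul_le_mul_of_nonneg_left _ (pow_nonneg hρ0.le n)
              exact mul_le_mul_of_nonneg_right (hρa (a n)) dist_nonneg
          _ = ρ ^ (n + 1) * dist x y := by ring
    obtain ⟨q, hq⟩ := hKne
    set C : ℝ := M + 1 + dist (0 : E2) q with hCdef
    have hd : ∀ n, dist (g n (p n)) (g n q) ≤ ρ ^ n * C := by
      intro n
      refine le_trans (hgdist n _ _) (mul_le_mul_of_nonneg_left ?_ (pow_nonneg hρ0.le n))
      calc dist (p n) q ≤ dist (p n) 0 + dist (0 : E2) q := dist_triangle _ _ _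
        _ ≤ C := by rw [hCdef, dist_comm]; linarith [hpd n]
    obtain ⟨x, hxK, φ, hφ, hk⟩ := hKc.tendsto_subseq (x := fun n => g n q)
      (fun n => hgK n q hq)
    have htend0 : Filter.Tendsto (fun n => ρ ^ n * C) Filter.atTop (nhds 0) := by
      have := (tendsto_pow_atTop_nhds_zero_of_lt_one hρ0.le hρ1).mul_const C
      simpa using this
    have hdist0 : Filter.Tendsto
        (fun n => dist (g (φ n) q) (g (φ n) (p (φ n)))) Filter.atTop (nhds 0) := by
      refine squeeze_zero (fun n => dist_nonneg) (fun n => ?_)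
        (htend0.comp hφ.tendsto_atTop)
      show dist (g (φ n) q) (g (φ n) (p (φ n))) ≤ ρ ^ (φ n) * C
      rw [dist_comm]
      exact hd (φ n)
    have hy : Filter.Tendsto (fun n => g (φ n) (p (φ n))) Filter.atTop (nhds x) :=
      hk.congr_dist hdist0
    have hxu : x ∈ u := by
      refine (isClosed_of_isLine hu).mem_of_tendsto hy ?_
      exact Filter.Eventually.of_forall fun n => hgu (φ n) _ (hpU (φ n))
    exact ⟨x, hxK, hxu⟩
end
end

section
/- Let K ⊆ [0,1]² be the attractor of an IFS {f_a}_{a∈A} of contracting similarities, and let L be a nonempty bounded set of lines such that for every u ∈ L there exists a ∈ A with f_a⁻¹(u) ∈ L (a recurrent set). Then every line in L intersects K. -/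
open Metric Set MeasureTheory Filter Real

noncomputable section

def proj (θ : ℝ) (x : E2) : ℝ := -Real.sin θ * x 0 + Real.cos θ * x 1

def lineAt (θ t : ℝ) : Set E2 := {x | proj θ x = t}

/-!
Write `d(v)` for the distance from `K` to a line `v`. Since `f a` maps `K` into itself and scales
distances by its ratio `r a`, we get `d(v) ≤ r a * d(f a ⁻¹' v)`. Following the recurrence from `u`
gives lines `vₙ ∈ L` with `d(u) ≤ Rⁿ d(vₙ)`, where `R < 1` is the largest ratio; boundedness of `L`
bounds `d(vₙ)`, so `d(u) = 0`, and by compactness of `K` the line `u` meets `K`.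
-/

lemma isLine_closed {u : Set E2} (h : IsLine u) : IsClosed u := by
  obtain ⟨p, v, -, rfl⟩ := h
  have : {x : E2 | ∃ t : ℝ, x = p + t • v}
      = (fun x => x - p) ⁻¹' (Submodule.span ℝ {v} : Set E2) := by
    ext x
    simp only [Set.mem_ofPred_eq, Set.mem_preimage, SetLike.mem_coe,
      Submodule.mem_span_singleton]
    constructor
    · rintro ⟨t, rfl⟩; exact ⟨t, by abel⟩
    · rintro ⟨t, ht⟩; exact ⟨t, by rw [ht]; abel⟩
  rw [this]
  exact (Submodule.span ℝ {v}).closed_of_finiteDimensional.preimage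
    (continuous_id.sub continuous_const)

lemma isLine_nonempty {u : Set E2} (h : IsLine u) : u.Nonempty := by
  obtain ⟨p, v, -, rfl⟩ := h
  exact ⟨p, 0, by simp⟩

lemma nonpos_of_forall_le_mul_of_le {β : Type*} {L : Set β} {g : β → ℝ} {R C : ℝ}
    (hR₀ : 0 ≤ R) (hR₁ : R < 1) (hC : ∀ v ∈ L, g v ≤ C)
    (hstep : ∀ v ∈ L, ∃ w ∈ L, g v ≤ R * g w) {v : β} (hv : v ∈ L) : g v ≤ 0 := by
  have hpow : ∀ n : ℕ, ∀ v ∈ L, g v ≤ R ^ n * C := by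
    intro n
    induction n with
    | zero => simpa using hC
    | succ n ih =>
      intro v hv
      obtain ⟨w, hw, hvw⟩ := hstep v hv
      calc g v ≤ R * g w := hvw
        _ ≤ R * (R ^ n * C) := mul_le_mul_of_nonneg_left (ih w hw) hR₀
        _ = R ^ (n + 1) * C := by ring
  have hlim : Tendsto (fun n : ℕ => R ^ n * C) atTop (nhds 0) := by
    simpa using (tendsto_pow_atTop_nhds_zero_of_lt_one hR₀ hR₁).mul_const C
  exact ge_of_tendsto' hlim fun n => hpow n v hv

namespace Metric

variable {X : Type*} [MetricSpace X]

/-- Junk value `0` when `K` or `v` is empty. -/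
def setDist (K v : Set X) : ℝ := ⨅ x : K, infDist (x : X) v

variable {K v : Set X}

lemma setDist_nonneg : 0 ≤ setDist K v :=
  Real.iInf_nonneg fun _ => infDist_nonneg

lemma setDist_le_infDist {x : X} (hx : x ∈ K) : setDist K v ≤ infDist x v :=
  ciInf_le ⟨0, by rintro _ ⟨y, rfl⟩; exact infDist_nonneg⟩ (⟨x, hx⟩ : K)

lemma setDist_le_infDist_add_dist {x : X} (hx : x ∈ K) (y : X) :
    setDist K v ≤ infDist y v + dist x y :=
  (setDist_le_infDist hx).trans infDist_le_infDist_add_dist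

lemma setDist_le_mul_setDist_preimage {f : X → X} {r : ℝ} (hr : 0 < r)
    (hf : ∀ x y, dist (f x) (f y) = r * dist x y) (hfK : MapsTo f K K) (hK : K.Nonempty)
    (hv : (f ⁻¹' v).Nonempty) : setDist K v ≤ r * setDist K (f ⁻¹' v) := by
  have : Nonempty K := hK.to_subtype
  rw [← div_le_iff₀' hr]
  refine le_ciInf fun ⟨x, hx⟩ => (le_infDist hv).2 fun y hy => ?_
  rw [div_le_iff₀' hr, ← hf]
  exact (setDist_le_infDist (hfK hx)).trans (infDist_le_dist_of_mem hy)

lemma _root_.IsCompact.inter_nonempty_of_setDist_eq_zero (hKc : IsCompact K)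
    (hK : K.Nonempty) (hvc : IsClosed v) (hv : v.Nonempty) (h : setDist K v = 0) :
    (K ∩ v).Nonempty := by
  obtain ⟨x, hx, hmin⟩ := hKc.exists_isMinOn hK (continuous_infDist_pt v).continuousOn
  have : Nonempty K := hK.to_subtype
  have hle : infDist x v ≤ setDist K v := le_ciInf fun y => hmin y.2
  exact ⟨x, hx, (hvc.mem_iff_infDist_zero hv).2 (le_antisymm (h ▸ hle) infDist_nonneg)⟩

end Metric

theorem stmt3_general {A : Type*} [Fintype A] [Nonempty A] (f : A → E2 → E2)
    (hf : ∀ a, IsContractingSimilarity (f a)) (K : Set E2)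
    (hKne : K.Nonempty) (hKc : IsCompact K) (hattr : K = ⋃ a, f a '' K)
    (L : Set (Set E2)) (hLlines : ∀ u ∈ L, IsLine u)
    (hLbdd : ∃ M : ℝ, ∀ u ∈ L, infDist (0 : E2) u ≤ M)
    (hLrec : ∀ u ∈ L, ∃ a, f a ⁻¹' u ∈ L) :
    ∀ u ∈ L, (K ∩ u).Nonempty := by
  obtain ⟨M, hM⟩ := hLbdd
  obtain ⟨k, hk⟩ := hKne
  choose r hr₀ hr₁ hr using hf
  obtain ⟨a₀, hr_max⟩ := Finite.exists_max r
  have hfK : ∀ a, MapsTo (f a) K K := fun a =>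
    mapsTo_iff_image_subset.2 ((subset_iUnion (fun a => f a '' K) a).trans hattr.superset)
  have hstep : ∀ v ∈ L, ∃ w ∈ L, setDist K v ≤ r a₀ * setDist K w := by
    intro v hv
    obtain ⟨a, ha⟩ := hLrec v hv
    refine ⟨_, ha, ?_⟩
    calc setDist K v ≤ r a * setDist K (f a ⁻¹' v) :=
          setDist_le_mul_setDist_preimage (hr₀ a) (hr a) (hfK a) ⟨k, hk⟩
            (isLine_nonempty (hLlines _ ha))
      _ ≤ r a₀ * setDist K (f a ⁻¹' v) := mul_le_mul_of_nonneg_right (hr_max a) setDist_nonneg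
  have hbdd : ∀ v ∈ L, setDist K v ≤ M + dist k 0 := fun v hv =>
    (setDist_le_infDist_add_dist hk 0).trans (add_le_add_left (hM v hv) _)
  intro u hu
  have hgap : setDist K u ≤ 0 := nonpos_of_forall_le_mul_of_le (hr₀ a₀).le (hr₁ a₀) hbdd hstep hu
  exact hKc.inter_nonempty_of_setDist_eq_zero ⟨k, hk⟩ (isLine_closed (hLlines u hu))
    (isLine_nonempty (hLlines u hu)) (le_antisymm hgap setDist_nonneg)

theorem stmt3 {A : Type*} [Fintype A] [Nonempty A] (f : A → E2 → E2)
    (hf : ∀ a, IsContractingSimilarity (f a)) (K : Set E2)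
    (hKne : K.Nonempty) (hKc : IsCompact K) (hattr : K = ⋃ a, f a '' K)
    (hKI : K ⊆ unitSq) (L : Set (Set E2)) (hLne : L.Nonempty)
    (hLlines : ∀ u ∈ L, IsLine u)
    (hLbdd : ∃ M : ℝ, ∀ u ∈ L, infDist (0 : E2) u ≤ M)
    (hLrec : ∀ u ∈ L, ∃ a, f a ⁻¹' u ∈ L) :
    ∀ u ∈ L, (K ∩ u).Nonempty :=
  stmt3_general f hf K hKne hKc hattr L hLlines hLbdd hLrec
end
end

section
/- Let K ⊆ [0,1]² be the attractor of an IFS {f_a}_{a∈A} of contracting similarities, and let L be a recurrent set of lines. Fix θ ∈ [0,π). If the set {t ∈ ℝ : the line with direction data (θ, t) belongs to L} contains an interval, then the orthogonal projection Π_θ(K) contains an interval. -/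
open Metric Set MeasureTheory Filter Real

noncomputable section

/-!
Follow a line `u ∈ L` backwards through the recurrence: `n` steps give a composition `g` of `n`
maps of the IFS, with Lipschitz constant `Rⁿ`, sending some line `v ∈ L` into `u` and `K` into `K`.
Since `v` passes within a fixed distance of the origin, `g` maps a point of `v` and a point of `K`
to a point of `u` and a point of `K` at distance `O(Rⁿ)`. Letting `n → ∞`, compactness gives a
point of `K` on `u`. Applied to the lines `lineAt θ t`, every `t` of the interval lies in `proj θ '' K`.
-/

theorem exists_common_contraction_ratio {X A : Type*} [PseudoMetricSpace X] [Finite A]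
    {f : A → X → X}
    (hf : ∀ a, ∃ r : ℝ, 0 < r ∧ r < 1 ∧ ∀ x y, dist (f a x) (f a y) = r * dist x y) :
    ∃ R : ℝ, 0 ≤ R ∧ R < 1 ∧ ∀ a x y, dist (f a x) (f a y) ≤ R * dist x y := by
  choose r hr0 hr1 hr using hf
  rcases isEmpty_or_nonempty A with hA | hA
  · exact ⟨0, le_rfl, zero_lt_one, fun a => isEmptyElim a⟩
  obtain ⟨a₀, ha₀⟩ := Finite.exists_max r
  exact ⟨r a₀, (hr0 a₀).le, hr1 a₀, fun a x y =>
    (hr a x y).trans_le (mul_le_mul_of_nonneg_right (ha₀ a) dist_nonneg)⟩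

theorem IsCompact.inter_nonempty_of_forall_exists_dist_lt {X : Type*} [PseudoMetricSpace X]
    {K u : Set X} (hK : IsCompact K) (hu : IsClosed u)
    (h : ∀ ε > 0, ∃ x ∈ K, ∃ y ∈ u, dist x y < ε) : (K ∩ u).Nonempty := by
  by_contra hKu
  rw [not_nonempty_iff_eq_empty, ← disjoint_iff_inter_eq_empty] at hKu
  obtain ⟨r, hr, hlt⟩ := Metric.exists_pos_forall_lt_edist hK hu hKu
  obtain ⟨x, hx, y, hy, hxy⟩ := h r hr
  exact (hlt x hx y hy).not_gt (edist_lt_coe.2 hxy)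

section Recurrence

variable {X A : Type*} [PseudoMetricSpace X] {f : A → X → X} {K : Set X} {L : Set (Set X)} {R : ℝ}

theorem exists_comp_mapsTo_of_recurrent (hf : ∀ a x y, dist (f a x) (f a y) ≤ R * dist x y)
    (hR0 : 0 ≤ R) (hfK : ∀ a, MapsTo (f a) K K) (hLrec : ∀ u ∈ L, ∃ a, f a ⁻¹' u ∈ L) (n : ℕ) :
    ∀ u ∈ L, ∃ g : X → X, (∀ x y, dist (g x) (g y) ≤ R ^ n * dist x y) ∧ MapsTo g K K ∧
      ∃ v ∈ L, MapsTo g v u := by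
  induction n with
  | zero => exact fun u hu => ⟨id, by simp, mapsTo_id K, u, hu, mapsTo_id u⟩
  | succ n ih =>
    intro u hu
    obtain ⟨a, ha⟩ := hLrec u hu
    obtain ⟨g, hg, hgK, v, hv, hgv⟩ := ih _ ha
    refine ⟨f a ∘ g, fun x y => ?_, (hfK a).comp hgK, v, hv, hgv⟩
    calc dist (f a (g x)) (f a (g y)) ≤ R * (R ^ n * dist x y) :=
          (hf a _ _).trans (mul_le_mul_of_nonneg_left (hg x y) hR0)
      _ = R ^ (n + 1) * dist x y := by ring

theorem inter_nonempty_of_recurrent (hf : ∀ a x y, dist (f a x) (f a y) ≤ R * dist x y)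
    (hR0 : 0 ≤ R) (hR1 : R < 1) (hK : IsCompact K) (hKne : K.Nonempty)
    (hfK : ∀ a, MapsTo (f a) K K) (x₀ : X) (hL_nonempty : ∀ u ∈ L, u.Nonempty)
    (hLbdd : ∃ M : ℝ, ∀ u ∈ L, infDist x₀ u ≤ M) (hLrec : ∀ u ∈ L, ∃ a, f a ⁻¹' u ∈ L)
    {u : Set X} (hu : u ∈ L) (hu_closed : IsClosed u) : (K ∩ u).Nonempty := by
  obtain ⟨M, hM⟩ := hLbdd
  obtain ⟨q, hq⟩ := hKne
  have hnear : ∀ v ∈ L, ∃ p ∈ v, dist p q < M + 1 + dist x₀ q := by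
    intro v hv
    obtain ⟨p, hp, hpx₀⟩ :=
      (infDist_lt_iff (hL_nonempty v hv)).1 ((hM v hv).trans_lt (lt_add_one M))
    exact ⟨p, hp, by linarith [dist_triangle_left p q x₀]⟩
  set C := M + 1 + dist x₀ q
  refine hK.inter_nonempty_of_forall_exists_dist_lt hu_closed fun ε hε => ?_
  have hRC : Tendsto (fun n : ℕ => R ^ n * C) atTop (nhds 0) := by
    simpa using (tendsto_pow_atTop_nhds_zero_of_lt_one hR0 hR1).mul_const C
  obtain ⟨n, hn⟩ := (hRC.eventually (gt_mem_nhds hε)).exists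
  obtain ⟨g, hg, hgK, v, hv, hgv⟩ := exists_comp_mapsTo_of_recurrent hf hR0 hfK hLrec n u hu
  obtain ⟨p, hp, hpq⟩ := hnear v hv
  refine ⟨g q, hgK hq, g p, hgv hp, ?_⟩
  calc dist (g q) (g p) ≤ R ^ n * dist p q := by rw [dist_comm]; exact hg p q
    _ ≤ R ^ n * C := mul_le_mul_of_nonneg_left hpq.le (pow_nonneg hR0 n)
    _ < ε := hn

end Recurrence

theorem IsLine.nonempty {u : Set E2} (hu : IsLine u) : u.Nonempty := by
  obtain ⟨p, v, -, rfl⟩ := hu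
  exact ⟨p, 0, by simp⟩

theorem isClosed_lineAt (θ t : ℝ) : IsClosed (lineAt θ t) :=
  isClosed_eq (by unfold proj; fun_prop) continuous_const

theorem stmt4_general {A : Type*} [Fintype A] (f : A → E2 → E2)
    (hf : ∀ a, IsContractingSimilarity (f a)) (K : Set E2)
    (hKne : K.Nonempty) (hKc : IsCompact K) (hattr : K = ⋃ a, f a '' K)
    (L : Set (Set E2))
    (hLlines : ∀ u ∈ L, IsLine u)
    (hLbdd : ∃ M : ℝ, ∀ u ∈ L, infDist (0 : E2) u ≤ M)
    (hLrec : ∀ u ∈ L, ∃ a, f a ⁻¹' u ∈ L)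
    (θ : ℝ)
    (hint : ∃ α β : ℝ, α < β ∧ Set.Icc α β ⊆ {t : ℝ | lineAt θ t ∈ L}) :
    ∃ α β : ℝ, α < β ∧ Set.Icc α β ⊆ proj θ '' K := by
  obtain ⟨R, hR0, hR1, hfR⟩ := exists_common_contraction_ratio hf
  have hfK : ∀ a, MapsTo (f a) K K := fun a x hx => by
    rw [hattr]; exact mem_iUnion_of_mem a (mem_image_of_mem _ hx)
  obtain ⟨α, β, hαβ, hsub⟩ := hint
  refine ⟨α, β, hαβ, fun t ht => ?_⟩
  obtain ⟨y, hyK, hyt⟩ := inter_nonempty_of_recurrent hfR hR0 hR1 hKc hKne hfK 0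
    (fun u hu => (hLlines u hu).nonempty) hLbdd hLrec (hsub ht) (isClosed_lineAt θ t)
  exact ⟨y, hyK, hyt⟩

theorem stmt4 {A : Type*} [Fintype A] [Nonempty A] (f : A → E2 → E2)
    (hf : ∀ a, IsContractingSimilarity (f a)) (K : Set E2)
    (hKne : K.Nonempty) (hKc : IsCompact K) (hattr : K = ⋃ a, f a '' K)
    (hKI : K ⊆ unitSq) (L : Set (Set E2)) (hLne : L.Nonempty)
    (hLlines : ∀ u ∈ L, IsLine u)
    (hLbdd : ∃ M : ℝ, ∀ u ∈ L, infDist (0 : E2) u ≤ M)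
    (hLrec : ∀ u ∈ L, ∃ a, f a ⁻¹' u ∈ L)
    (θ : ℝ) (hθ : θ ∈ Set.Ico 0 π)
    (hint : ∃ α β : ℝ, α < β ∧ Set.Icc α β ⊆ {t : ℝ | lineAt θ t ∈ L}) :
    ∃ α β : ℝ, α < β ∧ Set.Icc α β ⊆ proj θ '' K :=
  stmt4_general f hf K hKne hKc hattr L hLlines hLbdd hLrec θ hint
end
end

section
/- Let ν be a compactly supported Borel probability measure on ℝ² with finite 1-energy I₁(ν) = ∬ |x−y|⁻¹ dν(x)dν(y) < ∞. Then for a.e. θ ∈ [0,π), the projected measure Π_θν is absolutely continuous with an L² density, and ∫₀^π ‖d(Π_θν)/dx‖²_{L²} dθ ≤ C·I₁(ν) for an absolute constant C. -/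
open Metric Set MeasureTheory Filter Real

noncomputable section

/-! The lower density `D μ t = liminf μ (B(t, r)) / 2r` of a finite measure `μ` on `ℝ` controls
its `L²` density: if `∫ D dμ < ∞`, the Besicovitch covering theorem forces `μ ≪ Lebesgue`, and then
`D = dμ/dt` holds `μ`-a.e., so `‖dμ/dt‖₂² = ∫ D dμ`. For `μ = Π_θ ν`, Fatou bounds `∫ D dμ` by
`liminf (2r)⁻¹ (ν ⊗ ν) {|Π_θ x - Π_θ y| ≤ r}`. Since `Π_θ x - Π_θ y = |x - y| sin (α - θ)`, the
directions `θ ∈ [0, π)` with `|Π_θ x - Π_θ y| ≤ r` have measure at most `3π r / |x - y|`; Tonelli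
and Fatou in `θ` then give `∫₀^π ‖d(Π_θ ν)/dt‖₂² dθ ≤ (3π/2) I₁(ν)`. -/

open scoped ENNReal NNReal Topology

lemma measurable_measure_closedBall {X : Type*} [PseudoMetricSpace X] [MeasurableSpace X]
    [OpensMeasurableSpace X] [SecondCountableTopology X] (μ : Measure X) [SFinite μ] (δ : ℝ) :
    Measurable fun x => μ (closedBall x δ) :=
  measurable_measure_prodMk_left (s := {q : X × X | dist q.2 q.1 ≤ δ})
    (measurableSet_le (by fun_prop) measurable_const)

lemma lintegral_map_measure_closedBall {X Y : Type*} [MeasurableSpace X] [PseudoMetricSpace Y]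
    [MeasurableSpace Y] [OpensMeasurableSpace Y] [SecondCountableTopology Y]
    (ν : Measure X) [SFinite ν] {f : X → Y} (hf : Measurable f) (δ : ℝ) :
    ∫⁻ y, ν.map f (closedBall y δ) ∂ν.map f = ν.prod ν {p | dist (f p.1) (f p.2) ≤ δ} := by
  have hS : MeasurableSet {p : X × X | dist (f p.1) (f p.2) ≤ δ} :=
    measurableSet_le (by fun_prop) measurable_const
  rw [lintegral_map (measurable_measure_closedBall _ δ) hf, Measure.prod_apply hS]
  refine lintegral_congr fun x => ?_
  rw [Measure.map_apply hf measurableSet_closedBall]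
  congr 1
  ext y
  simp [dist_comm]

section RNDeriv

variable {α : Type*} [MeasurableSpace α] (μ ν : Measure α) [SigmaFinite μ]

lemma withDensity_ofReal_toReal_rnDeriv [μ.HaveLebesgueDecomposition ν] (hac : μ ≪ ν) :
    ν.withDensity (fun s => ENNReal.ofReal (μ.rnDeriv ν s).toReal) = μ := by
  refine (withDensity_congr_ae ?_).trans (Measure.withDensity_rnDeriv_eq μ ν hac)
  filter_upwards [Measure.rnDeriv_lt_top μ ν] with s hs using ENNReal.ofReal_toReal hs.ne

lemma lintegral_ofReal_toReal_rnDeriv_sq :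
    ∫⁻ s, ENNReal.ofReal ((μ.rnDeriv ν s).toReal ^ 2) ∂ν = ∫⁻ s, μ.rnDeriv ν s ^ 2 ∂ν := by
  refine lintegral_congr_ae ?_
  filter_upwards [Measure.rnDeriv_lt_top μ ν] with s hs
  rw [ENNReal.ofReal_pow ENNReal.toReal_nonneg, ENNReal.ofReal_toReal hs.ne]

end RNDeriv

section LowerDensity

variable (μ : Measure ℝ) (r : ℕ → ℝ)

def lowerDensity (t : ℝ) : ℝ≥0∞ :=
  liminf (fun n => μ (closedBall t (r n)) / volume (closedBall t (r n))) atTop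

lemma measurable_lowerDensity [SFinite μ] : Measurable (lowerDensity μ r) :=
  .liminf fun n => (measurable_measure_closedBall μ (r n)).div (measurable_measure_closedBall _ _)

lemma lintegral_lowerDensity_le_liminf [SFinite μ] :
    ∫⁻ t, lowerDensity μ r t ∂μ ≤
      liminf (fun n => (∫⁻ t, μ (closedBall t (r n)) ∂μ) / ENNReal.ofReal (2 * r n)) atTop := by
  have hFatou := lintegral_liminf_le (μ := μ) (u := atTop)
    (f := fun n t => μ (closedBall t (r n)) / volume (closedBall t (r n))) fun n =>
      (measurable_measure_closedBall μ (r n)).div (measurable_measure_closedBall volume (r n))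
  simpa only [lowerDensity, Real.volume_closedBall, div_eq_mul_inv,
    lintegral_mul_const _ (measurable_measure_closedBall μ _)] using hFatou

variable {μ r} [IsLocallyFiniteMeasure μ]

lemma measure_inter_setOf_lowerDensity_lt_le (hr : Tendsto r atTop (𝓝[>] 0)) (s : Set ℝ)
    (c : ℝ≥0) :
    μ (s ∩ {t | lowerDensity μ r t < c}) ≤ c * volume s := by
  refine ((Besicovitch.vitaliFamily μ).measure_le_of_frequently_le (c • volume) .rfl _
    fun t ht => ?_).trans (measure_mono inter_subset_left)
  have hballs : Tendsto (fun n => closedBall t (r n)) atTop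
      ((Besicovitch.vitaliFamily μ).filterAt t) :=
    (Besicovitch.tendsto_filterAt μ t).comp hr
  have hlt : liminf (fun n => μ (closedBall t (r n)) / volume (closedBall t (r n))) atTop < c :=
    ht.2
  refine hballs.frequently ((frequently_lt_of_liminf_lt (by isBoundedDefault) hlt).mono
    fun n hn => ?_)
  rw [Measure.smul_apply, ENNReal.smul_def, smul_eq_mul, ← ENNReal.div_le_iff_le_mul
    (.inr ENNReal.coe_ne_top) (.inl measure_closedBall_lt_top.ne)]
  exact hn.le

lemma absolutelyContinuous_of_lintegral_lowerDensity_ne_top (hr : Tendsto r atTop (𝓝[>] 0))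
    (h : ∫⁻ t, lowerDensity μ r t ∂μ ≠ ∞) : μ ≪ volume := by
  refine Measure.AbsolutelyContinuous.mk fun s _ hs => ?_
  have hfin : ∀ᵐ t ∂μ, lowerDensity μ r t < ∞ := ae_lt_top (measurable_lowerDensity μ r) h
  have hcover :
      s ⊆ (⋃ n : ℕ, s ∩ {t | lowerDensity μ r t < n}) ∪ {t | lowerDensity μ r t < ∞}ᶜ := by
    intro t hts
    by_cases hlt : lowerDensity μ r t < ∞
    · obtain ⟨n, hn⟩ := ENNReal.exists_nat_gt hlt.ne
      exact .inl (mem_iUnion.2 ⟨n, hts, hn⟩)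
    · exact .inr hlt
  refine measure_mono_null hcover (measure_union_null (measure_iUnion_null fun n => ?_) hfin)
  simpa [hs] using measure_inter_setOf_lowerDensity_lt_le hr s n

lemma lintegral_rnDeriv_sq_eq_lintegral_lowerDensity (hr : Tendsto r atTop (𝓝[>] 0))
    (hac : μ ≪ volume) :
    ∫⁻ t, μ.rnDeriv volume t ^ 2 = ∫⁻ t, lowerDensity μ r t ∂μ := by
  have hlim : ∀ᵐ t ∂μ, μ.rnDeriv volume t = lowerDensity μ r t := by
    filter_upwards [hac.ae_le (Besicovitch.ae_tendsto_rnDeriv μ volume)] with t ht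
    exact ((ht.comp hr).liminf_eq).symm
  simp only [sq]
  rw [lintegral_rnDeriv_mul hac (Measure.measurable_rnDeriv μ volume).aemeasurable,
    lintegral_congr_ae hlim]

end LowerDensity

lemma abs_sub_round_div_pi_mul_pi_le (t : ℝ) : |t - round (t / π) * π| ≤ π / 2 * |sin t| := by
  set s := t - round (t / π) * π
  have hs : |s| ≤ π / 2 := by
    have hround : |t / π - round (t / π)| ≤ 1 / 2 := abs_sub_round (t / π)
    have : s = (t / π - round (t / π)) * π := by rw [sub_mul, div_mul_cancel₀ _ pi_pos.ne']
    rw [this, abs_mul, abs_of_pos pi_pos]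
    nlinarith [pi_pos]
  have hsin : |sin s| = |sin t| := by
    rw [sin_sub_int_mul_pi, abs_mul, abs_neg_one_zpow, one_mul]
  have hJordan := mul_abs_le_abs_sin hs
  rw [hsin] at hJordan
  calc |s| = π / 2 * (2 / π * |s|) := by field_simp
    _ ≤ π / 2 * |sin t| := by gcongr

lemma volume_setOf_abs_sin_sub_le_inter_Ico (α u : ℝ) :
    volume ({θ | |sin (α - θ)| ≤ u} ∩ Ico 0 π) ≤ ENNReal.ofReal (3 * π * u) := by
  set k₀ : ℤ := ⌊α / π⌋
  -- `θ` is within `π u / 2` of `α - k π` for `k = round ((α - θ) / π)`, and `θ ∈ [0, π)` leaves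
  -- only three possible values of `k`.
  have hcover : {θ | |sin (α - θ)| ≤ u} ∩ Ico 0 π ⊆
      ⋃ k ∈ Finset.Icc (k₀ - 1) (k₀ + 1), closedBall (α - k * π) (π / 2 * u) := by
    rintro θ ⟨hθ, hθ0, hθπ⟩
    set k := round ((α - θ) / π)
    have hk := abs_le.1 (abs_sub_round ((α - θ) / π))
    have hθ_lt : θ / π < 1 := (div_lt_one pi_pos).2 hθπ
    have hθ_nonneg : 0 ≤ θ / π := div_nonneg hθ0 pi_pos.le
    have hq : (α - θ) / π = α / π - θ / π := sub_div _ _ _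
    have hfl := Int.floor_le (α / π)
    have hfl' := Int.lt_floor_add_one (α / π)
    have hlo : ((k₀ - 2 : ℤ) : ℝ) < k := by push_cast; linarith
    have hhi : (k : ℝ) < ((k₀ + 2 : ℤ) : ℝ) := by push_cast; linarith
    have hmem : k ∈ Finset.Icc (k₀ - 1) (k₀ + 1) := by
      have := Int.cast_lt.1 hlo; have := Int.cast_lt.1 hhi
      rw [Finset.mem_Icc]; omega
    refine mem_biUnion hmem ?_
    rw [mem_closedBall, Real.dist_eq, show θ - (α - k * π) = -(α - θ - k * π) by ring, abs_neg]
    exact (abs_sub_round_div_pi_mul_pi_le (α - θ)).trans (by gcongr; exact hθ)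
  calc volume ({θ | |sin (α - θ)| ≤ u} ∩ Ico 0 π)
      ≤ ∑ k ∈ Finset.Icc (k₀ - 1) (k₀ + 1), volume (closedBall (α - k * π) (π / 2 * u)) :=
        (measure_mono hcover).trans (measure_biUnion_finset_le _ _)
    _ = ENNReal.ofReal (3 * π * u) := by
        simp only [Real.volume_closedBall, Finset.sum_const, Int.card_Icc, nsmul_eq_mul]
        rw [show k₀ + 1 + 1 - (k₀ - 1) = 3 by ring, ← ENNReal.ofReal_natCast,
          ← ENNReal.ofReal_mul (by norm_num)]
        congr 1
        push_cast
        ring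

lemma proj_sub_proj (θ : ℝ) (x y : E2) : proj θ x - proj θ y = proj θ (x - y) := by
  simp only [proj, PiLp.sub_apply]; ring

lemma exists_proj_eq_norm_mul_sin (v : E2) : ∃ α, ∀ θ, proj θ v = ‖v‖ * sin (α - θ) := by
  set w : ℂ := ⟨v 0, v 1⟩
  have hw : ‖w‖ = ‖v‖ := by
    rw [EuclideanSpace.norm_eq, Fin.sum_univ_two, Complex.norm_def, Complex.normSq_apply]
    simp [w, sq]
  refine ⟨Complex.arg w, fun θ => ?_⟩
  rw [sin_sub, mul_sub, ← mul_assoc, ← mul_assoc, ← hw, Complex.norm_mul_sin_arg,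
    Complex.norm_mul_cos_arg, proj]
  ring

lemma volume_setOf_dist_proj_le_inter_Ico (x y : E2) {δ : ℝ} (hδ : 0 < δ) :
    volume ({θ | dist (proj θ x) (proj θ y) ≤ δ} ∩ Ico 0 π) ≤
      ENNReal.ofReal (3 * π * δ) * (edist x y)⁻¹ := by
  rcases eq_or_ne x y with rfl | hxy
  · rw [edist_self, ENNReal.inv_zero, ENNReal.mul_top (by positivity)]
    exact le_top
  obtain ⟨α, hα⟩ := exists_proj_eq_norm_mul_sin (x - y)
  have hR : 0 < dist x y := dist_pos.2 hxy
  have hset : {θ | dist (proj θ x) (proj θ y) ≤ δ} = {θ | |sin (α - θ)| ≤ δ / dist x y} := by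
    ext θ
    rw [mem_ofPred_eq, mem_ofPred_eq, Real.dist_eq, proj_sub_proj, hα, ← dist_eq_norm, abs_mul,
      abs_of_pos hR, le_div_iff₀ hR, mul_comm]
  calc volume ({θ | dist (proj θ x) (proj θ y) ≤ δ} ∩ Ico 0 π)
      ≤ ENNReal.ofReal (3 * π * (δ / dist x y)) := by
        rw [hset]; exact volume_setOf_abs_sin_sub_le_inter_Ico α _
    _ = ENNReal.ofReal (3 * π * δ) * (edist x y)⁻¹ := by
        rw [mul_div_assoc', ENNReal.ofReal_div_of_pos hR, edist_dist, div_eq_mul_inv]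

lemma measurable_proj (θ : ℝ) : Measurable (proj θ) := by
  unfold proj; fun_prop

lemma measurableSet_setOf_dist_proj_le (δ : ℝ) :
    MeasurableSet {q : ℝ × (E2 × E2) | dist (proj q.1 q.2.1) (proj q.1 q.2.2) ≤ δ} := by
  unfold proj; exact measurableSet_le (by fun_prop) measurable_const

section Energy

variable (ν : Measure E2) [SFinite ν]

lemma measurable_measure_prod_setOf_dist_proj_le (δ : ℝ) :
    Measurable fun θ => ν.prod ν {p | dist (proj θ p.1) (proj θ p.2) ≤ δ} :=
  measurable_measure_prodMk_left (measurableSet_setOf_dist_proj_le δ)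

lemma setLIntegral_measure_prod_setOf_dist_proj_le {δ : ℝ} (hδ : 0 < δ) :
    ∫⁻ θ in Ico 0 π, ν.prod ν {p | dist (proj θ p.1) (proj θ p.2) ≤ δ} ≤
      ENNReal.ofReal (3 * π * δ) * ∫⁻ p : E2 × E2, (edist p.1 p.2)⁻¹ ∂ν.prod ν := by
  have hS := measurableSet_setOf_dist_proj_le δ
  calc ∫⁻ θ in Ico 0 π, ν.prod ν {p | dist (proj θ p.1) (proj θ p.2) ≤ δ}
      = (volume.restrict (Ico 0 π)).prod (ν.prod ν)
          {q | dist (proj q.1 q.2.1) (proj q.1 q.2.2) ≤ δ} := (Measure.prod_apply hS).symm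
    _ = ∫⁻ p : E2 × E2, volume ({θ | dist (proj θ p.1) (proj θ p.2) ≤ δ} ∩ Ico 0 π) ∂ν.prod ν := by
        rw [Measure.prod_apply_symm hS]
        simp only [Measure.restrict_apply' measurableSet_Ico]
        rfl
    _ ≤ ∫⁻ p : E2 × E2, ENNReal.ofReal (3 * π * δ) * (edist p.1 p.2)⁻¹ ∂ν.prod ν :=
        lintegral_mono fun p => volume_setOf_dist_proj_le_inter_Ico p.1 p.2 hδ
    _ = ENNReal.ofReal (3 * π * δ) * ∫⁻ p : E2 × E2, (edist p.1 p.2)⁻¹ ∂ν.prod ν :=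
        lintegral_const_mul _ (by fun_prop)

lemma setLIntegral_liminf_measure_prod_setOf_dist_proj_le {r : ℕ → ℝ}
    (hr : Tendsto r atTop (𝓝[>] 0)) :
    ∫⁻ θ in Ico 0 π, liminf (fun n =>
        ν.prod ν {p | dist (proj θ p.1) (proj θ p.2) ≤ r n} / ENNReal.ofReal (2 * r n)) atTop ≤
      ENNReal.ofReal (3 * π / 2) * ∫⁻ p : E2 × E2, (edist p.1 p.2)⁻¹ ∂ν.prod ν := by
  refine (lintegral_liminf_le fun n =>
    (measurable_measure_prod_setOf_dist_proj_le ν (r n)).div_const _).trans ?_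
  refine liminf_le_of_frequently_le ?_ (by isBoundedDefault)
  refine ((hr.eventually self_mem_nhdsWithin).mono fun n (hn : 0 < r n) => ?_).frequently
  calc ∫⁻ θ in Ico 0 π,
        ν.prod ν {p | dist (proj θ p.1) (proj θ p.2) ≤ r n} / ENNReal.ofReal (2 * r n)
      = (∫⁻ θ in Ico 0 π, ν.prod ν {p | dist (proj θ p.1) (proj θ p.2) ≤ r n}) /
          ENNReal.ofReal (2 * r n) := by
        simp only [div_eq_mul_inv]
        exact lintegral_mul_const _ (measurable_measure_prod_setOf_dist_proj_le ν (r n))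
    _ ≤ ENNReal.ofReal (3 * π / 2) * ∫⁻ p : E2 × E2, (edist p.1 p.2)⁻¹ ∂ν.prod ν := by
        refine ENNReal.div_le_of_le_mul
          ((setLIntegral_measure_prod_setOf_dist_proj_le ν hn).trans_eq ?_)
        rw [mul_right_comm (ENNReal.ofReal _), ← ENNReal.ofReal_mul (by positivity)]
        ring_nf

end Energy

theorem stmt17 :
    ∃ C : ℝ, 0 < C ∧ ∀ ν : Measure E2, IsProbabilityMeasure ν →
      (∃ K : Set E2, IsCompact K ∧ ν Kᶜ = 0) →
      (∫⁻ p : E2 × E2, (edist p.1 p.2)⁻¹ ∂(ν.prod ν)) < ⊤ →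
      ∃ χ : ℝ → ℝ → ℝ,
        (∀ᵐ θ ∂(volume.restrict (Set.Ico 0 π)),
          Measure.map (proj θ) ν = volume.withDensity fun s => ENNReal.ofReal (χ θ s)) ∧
        (∫⁻ θ in Set.Ico 0 π, ∫⁻ s, ENNReal.ofReal ((χ θ s) ^ 2)) ≤
          ENNReal.ofReal C * ∫⁻ p : E2 × E2, (edist p.1 p.2)⁻¹ ∂(ν.prod ν) := by
  refine ⟨3 * π / 2, by positivity, fun ν _ _ hI => ?_⟩
  set r : ℕ → ℝ := fun n => (n : ℝ)⁻¹
  have hr : Tendsto r atTop (𝓝[>] 0) :=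
    tendsto_inv_atTop_nhdsGT_zero.comp tendsto_natCast_atTop_atTop
  -- a measurable majorant, via Fatou, of `θ ↦ ∫ lowerDensity d(Π_θ ν)`
  set H : ℝ → ℝ≥0∞ := fun θ => liminf (fun n =>
    ν.prod ν {p | dist (proj θ p.1) (proj θ p.2) ≤ r n} / ENNReal.ofReal (2 * r n)) atTop
  have hH : Measurable H := .liminf fun n =>
    (measurable_measure_prod_setOf_dist_proj_le ν (r n)).div_const _
  have hHint := setLIntegral_liminf_measure_prod_setOf_dist_proj_le ν hr
  have hLD (θ : ℝ) : ∫⁻ t, lowerDensity (ν.map (proj θ)) r t ∂ν.map (proj θ) ≤ H θ := by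
    simpa only [lintegral_map_measure_closedBall ν (measurable_proj θ)] using
      lintegral_lowerDensity_le_liminf (ν.map (proj θ)) r
  have hgood : ∀ᵐ θ ∂volume.restrict (Ico 0 π), ν.map (proj θ) ≪ volume ∧
      ∫⁻ s, (ν.map (proj θ)).rnDeriv volume s ^ 2 ≤ H θ := by
    filter_upwards [ae_lt_top hH (hHint.trans_lt (ENNReal.mul_lt_top ENNReal.ofReal_lt_top hI)).ne]
      with θ hθ
    have hac := absolutelyContinuous_of_lintegral_lowerDensity_ne_top hr ((hLD θ).trans_lt hθ).ne
    exact ⟨hac, (lintegral_rnDeriv_sq_eq_lintegral_lowerDensity hr hac).trans_le (hLD θ)⟩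
  refine ⟨fun θ s => ((ν.map (proj θ)).rnDeriv volume s).toReal, ?_, ?_⟩
  · filter_upwards [hgood] with θ hθ
    exact (withDensity_ofReal_toReal_rnDeriv _ _ hθ.1).symm
  · calc ∫⁻ θ in Ico 0 π, ∫⁻ s, ENNReal.ofReal (((ν.map (proj θ)).rnDeriv volume s).toReal ^ 2)
        ≤ ∫⁻ θ in Ico 0 π, H θ := lintegral_mono_ae (hgood.mono fun θ hθ =>
          (lintegral_ofReal_toReal_rnDeriv_sq _ _).trans_le hθ.2)
      _ ≤ _ := hHint
end
end
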